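/- The weakest liberal pre-expectation is the greatest sub-fixed point of the characteristic function in the lattice of expectations bounded by one: if the post-expectation E : Σ → ℝ≥0∞ satisfies E ≤ 1 pointwise, then every expectation I : Σ → ℝ≥0∞ with I ≤ 1 pointwise and I ≤ Φ_E I pointwise satisfies I ≤ wlpe E pointwise, where (wlpe E) σ := (∑' τ, W σ τ * E τ) + (1 - ∑' τ, W σ τ). -/

import Mathlib

open ENNReal

/-- The characteristic function of the loop `while G do body` with respect to
post-expectation `E`. -/
noncomputable def Phi {S : Type*} (G : S → Prop) [DecidablePred G] (body : S → PMF S)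
    (E : S → ℝ≥0∞) (X : S → ℝ≥0∞) : S → ℝ≥0∞ :=
  fun σ => if G σ then ∑' τ, body σ τ * X τ else E σ

theorem Phi_monotone {S : Type*} (G : S → Prop) [DecidablePred G] (body : S → PMF S)
    (E : S → ℝ≥0∞) : Monotone (Phi G body E) := by
  intro X Y hXY σ
  simp only [Phi]
  split
  · exact ENNReal.tsum_le_tsum fun τ => mul_le_mul_of_nonneg_left (hXY τ) zero_le
  · exact le_rfl

/-- The characteristic function, bundled as a monotone map on the complete
lattice of expectations. -/
noncomputable def PhiHom {S : Type*} (G : S → Prop) [DecidablePred G] (body : S → PMF S)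
    (E : S → ℝ≥0∞) : (S → ℝ≥0∞) →o (S → ℝ≥0∞) :=
  ⟨Phi G body E, Phi_monotone G body E⟩

/-- The stopped `n`-step kernels of the loop `while G do body`. -/
noncomputable def mu {S : Type*} (G : S → Prop) [DecidablePred G] [DecidableEq S]
    (body : S → PMF S) : ℕ → S → S → ℝ≥0∞
  | 0 => fun σ τ => if ¬ G σ ∧ τ = σ then 1 else 0
  | n + 1 => fun σ =>
      if G σ then (fun τ => ∑' σ', body σ σ' * mu G body n σ' τ) else mu G body 0 σ

/-- The loop's output sub-distribution. -/
noncomputable def W {S : Type*} (G : S → Prop) [DecidablePred G] [DecidableEq S]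
    (body : S → PMF S) (σ τ : S) : ℝ≥0∞ :=
  ⨆ n, mu G body n σ τ

/-- The weakest liberal pre-expectation of the loop. -/
noncomputable def wlpe {S : Type*} (G : S → Prop) [DecidablePred G] [DecidableEq S]
    (body : S → PMF S) (E : S → ℝ≥0∞) : S → ℝ≥0∞ :=
  fun σ => (∑' τ, W G body σ τ * E τ) + (1 - ∑' τ, W G body σ τ)

/-! Put `F := 1 - E`. Since `I ≤ 1` and every `body σ` has mass one, `1 - I` is a super-fixed
point of the characteristic function for `F`, and by induction on `n` any super-fixed point `J`
of it bounds the stopped expectations `∑' τ, μ_n σ τ * F τ`, hence also their supremum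
`∑' τ, W σ τ * F τ`. As `W σ` has mass at most one and `E ≤ 1`,
`wlpe E σ = 1 - ∑' τ, W σ τ * F τ`, so `I σ = 1 - (1 - I σ) ≤ wlpe E σ`. -/

theorem ENNReal.tsum_iSup_of_monotone {ι α : Type*} [Preorder ι] [IsDirectedOrder ι]
    (f : ι → α → ℝ≥0∞) (hf : Monotone f) :
    ∑' a, ⨆ i, f i a = ⨆ i, ∑' a, f i a := by
  refine le_antisymm ?_ (iSup_le fun i => ENNReal.tsum_le_tsum fun a => le_iSup (f · a) i)
  rw [ENNReal.tsum_eq_iSup_sum]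
  refine iSup_le fun s => ?_
  rw [ENNReal.finsetSum_iSup_of_monotone fun a _ _ hij => hf hij a]
  exact iSup_mono fun i => ENNReal.sum_le_tsum s

theorem PMF.tsum_mul_one_sub {α : Type*} (p : PMF α) {f : α → ℝ≥0∞} (hf : ∀ a, f a ≤ 1) :
    ∑' a, p a * (1 - f a) = 1 - ∑' a, p a * f a := by
  have hfin : ∑' a, p a * f a ≠ ∞ := by
    refine ne_top_of_le_ne_top p.tsum_coe_ne_top (ENNReal.tsum_le_tsum fun a => ?_)
    simpa using mul_le_mul_right (hf a) (p a)
  refine ENNReal.eq_sub_of_add_eq hfin ?_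
  rw [← ENNReal.tsum_add]
  simp_rw [← mul_add, tsub_add_cancel_of_le (hf _), mul_one]
  exact p.tsum_coe

section Loop

variable {S : Type*} (G : S → Prop) [DecidablePred G] (body : S → PMF S)

theorem Phi_one_sub {E I : S → ℝ≥0∞} (hI : I ≤ 1) :
    Phi G body (1 - E) (1 - I) = 1 - Phi G body E I := by
  funext σ
  simp only [Phi, Pi.sub_apply, Pi.one_apply]
  split_ifs
  · exact (body σ).tsum_mul_one_sub hI
  · rfl

variable [DecidableEq S]

theorem mu_succ_of_guard {σ : S} (h : G σ) (n : ℕ) (τ : S) :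
    mu G body (n + 1) σ τ = ∑' σ', body σ σ' * mu G body n σ' τ := by
  simp only [mu, if_pos h]

theorem mu_succ_of_not_guard {σ : S} (h : ¬ G σ) (n : ℕ) :
    mu G body (n + 1) σ = mu G body 0 σ := by
  simp only [mu, if_neg h]

theorem mu_le_mu_succ (n : ℕ) : mu G body n ≤ mu G body (n + 1) := by
  induction n with
  | zero =>
    intro σ τ
    by_cases h : G σ <;> simp [mu, h]
  | succ n ih =>
    intro σ τ
    by_cases h : G σ
    · rw [mu_succ_of_guard G body h, mu_succ_of_guard G body h]
      exact ENNReal.tsum_le_tsum fun σ' => mul_le_mul_right (ih σ' τ) _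
    · rw [mu_succ_of_not_guard G body h, mu_succ_of_not_guard G body h]

theorem monotone_mu : Monotone (mu G body) :=
  monotone_nat_of_le_succ (mu_le_mu_succ G body)

theorem tsum_mu_zero_mul_of_not_guard {σ : S} (h : ¬ G σ) (F : S → ℝ≥0∞) :
    ∑' τ, mu G body 0 σ τ * F τ = F σ := by
  have hpoint : ∀ τ, mu G body 0 σ τ * F τ = if τ = σ then F σ else 0 := fun τ => by
    by_cases hτ : τ = σ <;> simp [mu, h, hτ]
  rw [tsum_congr hpoint, tsum_ite_eq σ]

theorem tsum_mu_mul_le_of_Phi_le {F J : S → ℝ≥0∞} (hJ : Phi G body F J ≤ J) (n : ℕ) (σ : S) :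
    ∑' τ, mu G body n σ τ * F τ ≤ J σ := by
  have hstop : ∀ σ, ¬ G σ → ∑' τ, mu G body 0 σ τ * F τ ≤ J σ := fun σ h => by
    simpa [tsum_mu_zero_mul_of_not_guard G body h, Phi, h] using hJ σ
  induction n generalizing σ with
  | zero =>
    by_cases h : G σ
    · simp [mu, h]
    · exact hstop σ h
  | succ n ih =>
    by_cases h : G σ
    · calc ∑' τ, mu G body (n + 1) σ τ * F τ
            = ∑' σ', body σ σ' * ∑' τ, mu G body n σ' τ * F τ := by
              simp only [mu_succ_of_guard G body h, ← ENNReal.tsum_mul_right,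
                ← ENNReal.tsum_mul_left, mul_assoc]
              exact ENNReal.tsum_comm
          _ ≤ ∑' σ', body σ σ' * J σ' :=
              ENNReal.tsum_le_tsum fun σ' => mul_le_mul_right (ih σ') _
          _ ≤ J σ := by simpa [Phi, h] using hJ σ
    · simpa only [mu_succ_of_not_guard G body h] using hstop σ h

theorem tsum_W_mul_le_of_Phi_le {F J : S → ℝ≥0∞} (hJ : Phi G body F J ≤ J) (σ : S) :
    ∑' τ, W G body σ τ * F τ ≤ J σ := by
  simp only [W, ENNReal.iSup_mul]
  rw [ENNReal.tsum_iSup_of_monotone (fun n τ => mu G body n σ τ * F τ)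
    fun m n hmn τ => mul_le_mul_left (monotone_mu G body hmn σ τ) _]
  exact iSup_le (tsum_mu_mul_le_of_Phi_le G body hJ · σ)

theorem tsum_W_le_one (σ : S) : ∑' τ, W G body σ τ ≤ 1 := by
  have hone : Phi G body 1 1 ≤ 1 := fun σ => by
    by_cases h : G σ <;> simp [Phi, h, (body σ).tsum_coe]
  simpa using tsum_W_mul_le_of_Phi_le G body hone σ

theorem wlpe_eq_one_sub {E : S → ℝ≥0∞} (hE : ∀ σ, E σ ≤ 1) (σ : S) :
    wlpe G body E σ = 1 - ∑' τ, W G body σ τ * (1 - E τ) := by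
  rw [wlpe]
  set a := ∑' τ, W G body σ τ * E τ
  set b := ∑' τ, W G body σ τ * (1 - E τ)
  set s := ∑' τ, W G body σ τ
  have hab : a + b = s := by
    rw [← ENNReal.tsum_add]
    simp_rw [← mul_add, add_tsub_cancel_of_le (hE _), mul_one, s]
  have hs : s ≤ 1 := tsum_W_le_one G body σ
  have hb : b ≠ ∞ := ne_top_of_le_ne_top one_ne_top ((le_add_self.trans_eq hab).trans hs)
  refine ENNReal.eq_sub_of_add_eq hb ?_
  rw [add_right_comm, hab, add_tsub_cancel_of_le hs]

end Loop

theorem le_wlpe_of_subfixed_general {S : Type*} [DecidableEq S]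
    (G : S → Prop) [DecidablePred G] (body : S → PMF S)
    (E : S → ℝ≥0∞) (hE : ∀ σ, E σ ≤ 1)
    (I : S → ℝ≥0∞) (hI : ∀ σ, I σ ≤ 1)
    (hsub : ∀ σ, I σ ≤ Phi G body E I σ) :
    ∀ σ, I σ ≤ wlpe G body E σ := by
  have hJ : Phi G body (1 - E) (1 - I) ≤ 1 - I := by
    rw [Phi_one_sub G body hI]
    exact fun σ => tsub_le_tsub_left (hsub σ) 1
  intro σ
  calc I σ = 1 - (1 - I σ) := (ENNReal.sub_sub_cancel one_ne_top (hI σ)).symm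
    _ ≤ 1 - ∑' τ, W G body σ τ * (1 - E τ) :=
        tsub_le_tsub_left (tsum_W_mul_le_of_Phi_le G body hJ σ) 1
    _ = wlpe G body E σ := (wlpe_eq_one_sub G body hE σ).symm

/-- the weakest liberal pre-expectation is the greatest sub-fixed
point of the characteristic function among expectations bounded by one. -/
theorem le_wlpe_of_subfixed {S : Type*} [Countable S] [DecidableEq S]
    (G : S → Prop) [DecidablePred G] (body : S → PMF S)
    (E : S → ℝ≥0∞) (hE : ∀ σ, E σ ≤ 1)
    (I : S → ℝ≥0∞) (hI : ∀ σ, I σ ≤ 1)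
    (hsub : ∀ σ, I σ ≤ Phi G body E I σ) :
    ∀ σ, I σ ≤ wlpe G body E σ :=
  le_wlpe_of_subfixed_general G body E hE I hI hsub
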